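/- arXiv:2101.12697 — 6 statements merged into one kernel-verified Lean document; each statement's English description precedes it below -/
import Mathlib

section
/- Let z₀ > 0 and t be real numbers, let θ(z) = (z/4)(1/z₀² + 1/z²), and let u > 0. Then for the point z = z₀ + u·e^{iπ/4} on the steepest-descent ray emanating from z₀, one has the exact identity Re(2 i t θ(z)) = − t u² (√2 z₀ + u) / ( 2√2 · z₀² · (z₀² + √2 z₀ u + u²) ). -/
/-!
Since `Re (i w) = -Im w` and `z / z² = z⁻¹`, the real part of `2 i t θ(z)` only involves
`Im z` and `|z|²`: it equals `-(t Im z / 2) (1 / z₀² - 1 / |z|²)`. On the ray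
`z = z₀ + u e^{iπ/4}` one has `Im z = u / √2` and, by the law of cosines,
`|z|² = z₀² + √2 z₀ u + u²`, which gives the closed form.
-/

open Complex

noncomputable def phase (z₀ : ℝ) (z : ℂ) : ℂ := z / 4 * (1 / (z₀ : ℂ) ^ 2 + 1 / z ^ 2)

lemma phase_eq (z₀ : ℝ) (z : ℂ) : phase z₀ z = ((4 * z₀ ^ 2)⁻¹ : ℝ) * z + z⁻¹ / 4 := by
  rcases eq_or_ne z 0 with rfl | hz
  · simp [phase]
  · unfold phase
    push_cast
    field_simp

lemma phase_im (z₀ : ℝ) (z : ℂ) :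
    (phase z₀ z).im = z.im / 4 * ((z₀ ^ 2)⁻¹ - (normSq z)⁻¹) := by
  rw [phase_eq, add_im, im_ofReal_mul, div_ofNat_im, inv_im]
  ring

lemma re_two_mul_I_mul_phase (z₀ t : ℝ) (z : ℂ) :
    (2 * I * t * phase z₀ z).re = -(t * z.im / 2 * ((z₀ ^ 2)⁻¹ - (normSq z)⁻¹)) := by
  rw [show 2 * I * t * phase z₀ z = I * ((2 * t : ℝ) * phase z₀ z) by push_cast; ring,
    I_mul_re, im_ofReal_mul, phase_im]
  ring

lemma im_ofReal_add_mul_exp (a u φ : ℝ) : ((a : ℂ) + u * exp (φ * I)).im = u * Real.sin φ := by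
  simp [exp_mul_I, ← ofReal_cos, ← ofReal_sin]

lemma normSq_ofReal_add_mul_exp (a u φ : ℝ) :
    normSq ((a : ℂ) + u * exp (φ * I)) = a ^ 2 + 2 * a * u * Real.cos φ + u ^ 2 := by
  rw [exp_mul_I, ← ofReal_cos, ← ofReal_sin, normSq_apply]
  simp only [add_re, add_im, ofReal_re, ofReal_im, mul_re, mul_im, I_re, I_im]
  linear_combination u ^ 2 * Real.sin_sq_add_cos_sq φ

theorem stmt_1_general (z₀ t u : ℝ) (hz₀ : 0 < z₀)
    (z : ℂ) (hz : z = (z₀ : ℂ) + (u : ℂ) * Complex.exp (Complex.I * ((Real.pi : ℂ) / 4))) :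
    (2 * Complex.I * (t : ℂ) * (z / 4 * (1 / (z₀ : ℂ) ^ 2 + 1 / z ^ 2))).re =
      -(t * u ^ 2 * (Real.sqrt 2 * z₀ + u)) /
        (2 * Real.sqrt 2 * z₀ ^ 2 * (z₀ ^ 2 + Real.sqrt 2 * z₀ * u + u ^ 2)) := by
  have hray : z = z₀ + u * exp ((Real.pi / 4 : ℝ) * I) := by rw [hz, mul_comm I]; push_cast; rfl
  have him : z.im = u * (√2 / 2) := by rw [hray, im_ofReal_add_mul_exp, Real.sin_pi_div_four]
  have hnormSq : normSq z = z₀ ^ 2 + √2 * z₀ * u + u ^ 2 := by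
    rw [hray, normSq_ofReal_add_mul_exp, Real.cos_pi_div_four]; ring
  have hsqrt : √2 ^ 2 = 2 := Real.sq_sqrt zero_le_two
  -- `2 (z₀² + √2 z₀ u + u²) = z₀² + (z₀ + √2 u)²`
  have hpos : 0 < z₀ ^ 2 + √2 * z₀ * u + u ^ 2 := by
    nlinarith [sq_nonneg (z₀ + √2 * u), pow_pos hz₀ 2]
  rw [← phase, re_two_mul_I_mul_phase, him, hnormSq, inv_sub_inv (pow_ne_zero 2 hz₀.ne') hpos.ne',
    show z₀ ^ 2 + √2 * z₀ * u + u ^ 2 - z₀ ^ 2 = u * (√2 * z₀ + u) by ring]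
  field_simp
  rw [hsqrt]

/-- For `z₀ > 0`, `t : ℝ`, `u > 0` and the point `z = z₀ + u·e^{iπ/4}` on the
steepest-descent ray, with `θ(z) = (z/4)(1/z₀² + 1/z²)`, one has
`Re(2 i t θ(z)) = − t u² (√2 z₀ + u) / ( 2√2 z₀² (z₀² + √2 z₀ u + u²) )`. -/
theorem stmt_1 (z₀ t u : ℝ) (hz₀ : 0 < z₀) (hu : 0 < u)
    (z : ℂ) (hz : z = (z₀ : ℂ) + (u : ℂ) * Complex.exp (Complex.I * ((Real.pi : ℂ) / 4))) :
    (2 * Complex.I * (t : ℂ) * (z / 4 * (1 / (z₀ : ℂ) ^ 2 + 1 / z ^ 2))).re =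
      -(t * u ^ 2 * (Real.sqrt 2 * z₀ + u)) /
        (2 * Real.sqrt 2 * z₀ ^ 2 * (z₀ ^ 2 + Real.sqrt 2 * z₀ * u + u ^ 2)) :=
  stmt_1_general z₀ t u hz₀ z hz
end

section
/- Let z₀ > 0, let t > 0, and let θ(z) = (z/4)(1/z₀² + 1/z²). Then for every h with 0 < h ≤ z₀/√2 and z = h·e^{iπ/4}, one has Re(2 i t θ(z)) ≥ t/(4 z₀); in particular |e^{−2 i t θ(z)}| ≤ e^{− t/(4 z₀)}. -/
/-!
For any real `t`, `z₀` and complex `z`, `Re (2itθ(z)) = (t/2) · Im z · (1/|z|² - 1/z₀²)`.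
On the ray `z = h e^{iπ/4}` this is `(t/(2√2)) (1/h - h/z₀²)`, a decreasing function of `h`
whose value at the endpoint `h = z₀/√2` is exactly `t/(4z₀)`. The bound on
`|e^{-2itθ(z)}| = e^{-Re(2itθ(z))}` follows.
-/

open Complex

noncomputable def theta (z₀ : ℝ) (z : ℂ) : ℂ := z / 4 * (1 / (z₀ : ℂ) ^ 2 + 1 / z ^ 2)

theorem re_two_I_mul_t_mul_theta (z₀ t : ℝ) (z : ℂ) :
    (2 * I * t * theta z₀ z).re = t / 2 * z.im * (1 / normSq z - 1 / z₀ ^ 2) := by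
  have hsplit : 2 * I * t * theta z₀ z = I * (t / 2) * (z * ((1 / z₀ ^ 2 : ℝ) : ℂ) + z⁻¹) := by
    rcases eq_or_ne z 0 with rfl | hz
    · simp [theta]
    · unfold theta; push_cast; field_simp; ring
  rw [hsplit]
  simp only [mul_re, mul_im, add_im, inv_im, I_re, I_im, ofReal_re, ofReal_im, div_ofNat_re,
    div_ofNat_im]
  ring

theorem im_ofReal_mul_exp_I_mul_pi_div_four (h : ℝ) :
    ((h : ℂ) * exp (I * ((Real.pi : ℂ) / 4))).im = h * (Real.sqrt 2 / 2) := by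
  rw [mul_comm I, ← ofReal_ofNat, ← ofReal_div, exp_mul_I, ← ofReal_cos, ← ofReal_sin,
    Real.cos_pi_div_four, Real.sin_pi_div_four]
  simp

theorem normSq_ofReal_mul_exp_I_mul_ofReal (h φ : ℝ) :
    normSq ((h : ℂ) * exp (I * φ)) = h ^ 2 := by
  rw [normSq_eq_norm_sq, norm_mul, norm_exp_I_mul_ofReal, norm_real, Real.norm_eq_abs,
    mul_one, sq_abs]

theorem div_four_le_of_le_div_sqrt_two {z₀ t h : ℝ} (hz₀ : 0 < z₀) (ht : 0 ≤ t) (hh : 0 < h)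
    (hhz : h ≤ z₀ / Real.sqrt 2) :
    t / (4 * z₀) ≤ t / 2 * (h * (Real.sqrt 2 / 2)) * (1 / h ^ 2 - 1 / z₀ ^ 2) := by
  set s := Real.sqrt 2 * h with hs
  have hs2 : Real.sqrt 2 ^ 2 = 2 := Real.sq_sqrt zero_le_two
  have hsz : s ≤ z₀ := by
    rw [le_div_iff₀ (by positivity)] at hhz; linarith
  have hs0 : 0 < s := by positivity
  -- `2z₀² - s² - sz₀ = (z₀ - s)(2z₀ + s)`
  have hsq : s * z₀ ≤ 2 * z₀ ^ 2 - s ^ 2 := by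
    nlinarith [mul_nonneg (sub_nonneg.2 hsz) (by positivity : 0 ≤ 2 * z₀ + s)]
  have hrhs : t / 2 * (h * (Real.sqrt 2 / 2)) * (1 / h ^ 2 - 1 / z₀ ^ 2)
      = t * (2 * z₀ ^ 2 - s ^ 2) / (4 * s * z₀ ^ 2) := by
    rw [hs]; field_simp; rw [hs2]; ring
  calc t / (4 * z₀) = t * (s * z₀) / (4 * s * z₀ ^ 2) := by field_simp
    _ ≤ t * (2 * z₀ ^ 2 - s ^ 2) / (4 * s * z₀ ^ 2) := by gcongr
    _ = _ := hrhs.symm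

/-- For `z₀ > 0`, `t > 0`, `0 < h ≤ z₀/√2` and `z = h·e^{iπ/4}`, with
`θ(z) = (z/4)(1/z₀² + 1/z²)`, one has `Re(2itθ(z)) ≥ t/(4z₀)`; in particular
`|e^{−2itθ(z)}| ≤ e^{−t/(4z₀)}`. -/
theorem stmt_3 (z₀ t h : ℝ) (hz₀ : 0 < z₀) (ht : 0 < t) (hh : 0 < h)
    (hhz : h ≤ z₀ / Real.sqrt 2)
    (z : ℂ) (hz : z = (h : ℂ) * Complex.exp (Complex.I * ((Real.pi : ℂ) / 4))) :
    t / (4 * z₀) ≤ (2 * Complex.I * (t : ℂ) * (z / 4 * (1 / (z₀ : ℂ) ^ 2 + 1 / z ^ 2))).re ∧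
      ‖(Complex.exp (-(2 * Complex.I * (t : ℂ) * (z / 4 * (1 / (z₀ : ℂ) ^ 2 + 1 / z ^ 2)))))‖ ≤
        Real.exp (-(t / (4 * z₀))) := by
  have hre : t / (4 * z₀) ≤ (2 * I * t * theta z₀ z).re := by
    have hnormSq : normSq z = h ^ 2 := by
      rw [hz, ← ofReal_ofNat, ← ofReal_div]
      exact normSq_ofReal_mul_exp_I_mul_ofReal h _
    rw [re_two_I_mul_t_mul_theta, hnormSq, hz, im_ofReal_mul_exp_I_mul_pi_div_four]
    exact div_four_le_of_le_div_sqrt_two hz₀ ht.le hh hhz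
  refine ⟨hre, ?_⟩
  rw [norm_exp, neg_re]
  exact Real.exp_le_exp.mpr (neg_le_neg hre)
end

section
/- Let z₀ > 0 and let ν : ℝ → ℝ be bounded measurable on [−z₀, z₀] and continuous at a point x₀ ∈ (−z₀, z₀). Then, with δ(z) = exp( i ∫_{−z₀}^{z₀} ν(s)/(s−z) ds ), the boundary values satisfy lim_{ε→0⁺} δ(x₀+iε)/δ(x₀−iε) = e^{−2π ν(x₀)}. In particular, if ν(s) = −(1/2π) log(1+|r(s)|²) for a function r continuous at x₀, then the limit equals 1 + |r(x₀)|². -/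
open MeasureTheory Filter Real ProbabilityTheory Topology Complex

/-! Since `(s - x - iε)⁻¹ - (s - x + iε)⁻¹ = 2iε / ((s - x)² + ε²)`, the quotient
`δ(x₀ + iε) / δ(x₀ - iε)` is `exp (-2π ∫ p_ε ν)`, where `p_ε` is the Cauchy density with location
`x₀` and scale `ε`. These densities are rescalings `ε⁻¹ p₁(ε⁻¹ ·)` of one density decaying like
`x⁻²`, hence a family of peak functions at `x₀`, so `∫ p_ε ν → ν x₀`. -/

lemma intervalIntegrable_of_norm_le {E : Type*} [NormedAddCommGroup E] {f : ℝ → E} {a b M : ℝ}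
    (hab : a ≤ b) (hf : AEStronglyMeasurable f volume) (hbound : ∀ s ∈ Set.Icc a b, ‖f s‖ ≤ M) :
    IntervalIntegrable f volume a b := by
  refine (intervalIntegrable_const (c := M)).mono_fun' hf.restrict ?_
  rw [Set.uIoc_of_le hab]
  filter_upwards [ae_restrict_mem measurableSet_Ioc] with s hs
  exact hbound s (Set.Ioc_subset_Icc_self hs)

lemma tendsto_norm_mul_cauchyPDFReal_cobounded :
    Tendsto (fun x : ℝ => ‖x‖ * cauchyPDFReal 0 1 x) (Bornology.cobounded ℝ) (𝓝 0) := by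
  have hbound : ∀ x : ℝ, ‖x‖ * cauchyPDFReal 0 1 x ≤ π⁻¹ * ‖x‖⁻¹ := by
    intro x
    rcases eq_or_ne x 0 with rfl | hx
    · simp
    have hx' : 0 < |x| := abs_pos.2 hx
    rw [cauchyPDFReal_def, NNReal.coe_one, Real.norm_eq_abs]
    field_simp
    nlinarith [sq_abs x, pi_pos]
  refine squeeze_zero (fun x => ?_) hbound ?_
  · exact mul_nonneg (norm_nonneg x) (cauchyPDF_pos 0 one_ne_zero x).le
  · simpa only [mul_zero, Function.comp_def] using
      (tendsto_inv_atTop_zero.comp tendsto_norm_cobounded_atTop).const_mul π⁻¹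

theorem tendsto_integral_cauchyPDFReal_smul {E : Type*} [NormedAddCommGroup E] [NormedSpace ℝ E]
    [CompleteSpace E] {g : ℝ → E} {x₀ : ℝ} (hg : Integrable g) (hcont : ContinuousAt g x₀) :
    Tendsto (fun ε : ℝ => ∫ x, cauchyPDFReal x₀ ε.toNNReal x • g x) (𝓝[>] 0) (𝓝 (g x₀)) := by
  have hpeak := tendsto_integral_comp_smul_smul_of_integrable' (μ := volume)
    (fun x => (cauchyPDF_pos 0 one_ne_zero x).le) (integral_cauchyPDFReal_eq_one 0 one_ne_zero)
    (by simpa using tendsto_norm_mul_cauchyPDFReal_cobounded) hg hcont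
  refine (hpeak.comp tendsto_inv_nhdsGT_zero).congr' ?_
  filter_upwards [self_mem_nhdsWithin] with ε (hε : 0 < ε)
  refine integral_congr_ae (ae_of_all _ fun x => ?_)
  simp only [Module.finrank_self, pow_one, smul_eq_mul, cauchyPDFReal_def, NNReal.coe_one,
    Real.coe_toNNReal ε hε.le]
  congr 1
  field_simp
  ring

theorem tendsto_intervalIntegral_cauchyPDFReal_smul {E : Type*} [NormedAddCommGroup E]
    [NormedSpace ℝ E] [CompleteSpace E] {g : ℝ → E} {a b x₀ : ℝ} (hx₀ : x₀ ∈ Set.Ioo a b)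
    (hg : IntervalIntegrable g volume a b) (hcont : ContinuousAt g x₀) :
    Tendsto (fun ε : ℝ => ∫ x in a..b, cauchyPDFReal x₀ ε.toNNReal x • g x) (𝓝[>] 0)
      (𝓝 (g x₀)) := by
  have hab : a ≤ b := (hx₀.1.trans hx₀.2).le
  have hcont' : ContinuousAt ((Set.Ioc a b).indicator g) x₀ := by
    refine hcont.congr ?_
    filter_upwards [Ioo_mem_nhds hx₀.1 hx₀.2] with x hx
    exact (Set.indicator_of_mem (Set.Ioo_subset_Ioc_self hx) g).symm
  have hlim := tendsto_integral_cauchyPDFReal_smul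
    ((integrable_indicator_iff measurableSet_Ioc).2 hg.1) hcont'
  rw [Set.indicator_of_mem (Set.Ioo_subset_Ioc_self hx₀)] at hlim
  refine hlim.congr fun ε => ?_
  simp_rw [← Set.indicator_smul_apply, integral_indicator measurableSet_Ioc,
    intervalIntegral.integral_of_le hab]

lemma I_mul_inv_sub_sub_inv_sub (s x : ℝ) {ε : ℝ} (hε : 0 < ε) :
    I * (((s : ℂ) - (x + ε * I))⁻¹ - ((s : ℂ) - (x - ε * I))⁻¹)
      = ((-(2 * π) * cauchyPDFReal x ε.toNNReal s : ℝ) : ℂ) := by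
  have hpos : 0 < (s - x) ^ 2 + ε ^ 2 := by positivity
  have hprod : ((s : ℂ) - (x + ε * I)) * ((s : ℂ) - (x - ε * I))
      = (((s - x) ^ 2 + ε ^ 2 : ℝ) : ℂ) := by
    push_cast
    ring_nf
    rw [I_sq]
    ring
  have hne : ((s : ℂ) - (x + ε * I)) * ((s : ℂ) - (x - ε * I)) ≠ 0 := by
    rw [hprod]; exact_mod_cast hpos.ne'
  rw [inv_sub_inv (left_ne_zero_of_mul hne) (right_ne_zero_of_mul hne), hprod,
    cauchyPDFReal_def, Real.coe_toNNReal ε hε.le]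
  push_cast
  field_simp
  ring_nf
  rw [I_sq]
  ring

lemma intervalIntegrable_ofReal_div_sub {ν : ℝ → ℝ} {a b : ℝ} (hν : IntervalIntegrable ν volume a b)
    {z : ℂ} (hz : z.im ≠ 0) :
    IntervalIntegrable (fun s : ℝ => (ν s : ℂ) / (s - z)) volume a b := by
  have hne : ∀ s : ℝ, (s : ℂ) - z ≠ 0 := fun s h => hz (by simpa using congrArg im h)
  simp_rw [div_eq_mul_inv]
  exact IntervalIntegrable.mul_continuousOn ⟨hν.1.ofReal, hν.2.ofReal⟩
    ((continuous_ofReal.sub continuous_const).continuousOn.inv₀ fun s _ => hne s)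

lemma exp_div_exp_eq_exp_integral_cauchyPDFReal {ν : ℝ → ℝ} {a b : ℝ}
    (hν : IntervalIntegrable ν volume a b) (x : ℝ) {ε : ℝ} (hε : 0 < ε) :
    exp (I * ∫ s in a..b, (ν s : ℂ) / ((s : ℂ) - ((x : ℂ) + (ε : ℂ) * I))) /
        exp (I * ∫ s in a..b, (ν s : ℂ) / ((s : ℂ) - ((x : ℂ) - (ε : ℂ) * I)))
      = (Real.exp (-(2 * π) * ∫ s in a..b, cauchyPDFReal x ε.toNNReal s • ν s) : ℂ) := by
  rw [← Complex.exp_sub, ← mul_sub, ← intervalIntegral.integral_sub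
    (intervalIntegrable_ofReal_div_sub hν (by simp [hε.ne']))
    (intervalIntegrable_ofReal_div_sub hν (by simp [hε.ne'])),
    ← intervalIntegral.integral_const_mul, ← intervalIntegral.integral_const_mul,
    Complex.ofReal_exp, ← intervalIntegral.integral_ofReal]
  congr 1
  refine intervalIntegral.integral_congr fun s _ => ?_
  simp only [div_eq_mul_inv, ← mul_sub, smul_eq_mul]
  rw [mul_left_comm, I_mul_inv_sub_sub_inv_sub s x hε]
  push_cast
  ring

theorem stmt_8_general (z₀ M : ℝ) (ν : ℝ → ℝ) (hmeas : Measurable ν)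
    (hbound : ∀ s ∈ Set.Icc (-z₀) z₀, |ν s| ≤ M)
    (x₀ : ℝ) (hx₀ : x₀ ∈ Set.Ioo (-z₀) z₀) (hcont : ContinuousAt ν x₀) :
    Tendsto
        (fun ε : ℝ =>
          Complex.exp (Complex.I *
              ∫ s in (-z₀)..z₀, (ν s : ℂ) / ((s : ℂ) - ((x₀ : ℂ) + (ε : ℂ) * Complex.I))) /
            Complex.exp (Complex.I *
              ∫ s in (-z₀)..z₀, (ν s : ℂ) / ((s : ℂ) - ((x₀ : ℂ) - (ε : ℂ) * Complex.I))))
        (nhdsWithin 0 (Set.Ioi 0))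
        (nhds ((Real.exp (-(2 * Real.pi * ν x₀)) : ℝ) : ℂ)) ∧
      ∀ r : ℝ → ℂ,
        (∀ s : ℝ, ν s = -(1 / (2 * Real.pi)) * Real.log (1 + ‖r s‖ ^ 2)) →
        Tendsto
          (fun ε : ℝ =>
            Complex.exp (Complex.I *
                ∫ s in (-z₀)..z₀, (ν s : ℂ) / ((s : ℂ) - ((x₀ : ℂ) + (ε : ℂ) * Complex.I))) /
              Complex.exp (Complex.I *
                ∫ s in (-z₀)..z₀, (ν s : ℂ) / ((s : ℂ) - ((x₀ : ℂ) - (ε : ℂ) * Complex.I))))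
          (nhdsWithin 0 (Set.Ioi 0))
          (nhds ((1 + ‖r x₀‖ ^ 2 : ℝ) : ℂ)) := by
  have hν : IntervalIntegrable ν volume (-z₀) z₀ :=
    intervalIntegrable_of_norm_le (hx₀.1.trans hx₀.2).le hmeas.aestronglyMeasurable hbound
  have hjump : Tendsto
      (fun ε : ℝ =>
        exp (I * ∫ s in (-z₀)..z₀, (ν s : ℂ) / ((s : ℂ) - ((x₀ : ℂ) + (ε : ℂ) * I))) /
          exp (I * ∫ s in (-z₀)..z₀, (ν s : ℂ) / ((s : ℂ) - ((x₀ : ℂ) - (ε : ℂ) * I))))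
      (𝓝[>] 0) (𝓝 ((Real.exp (-(2 * π * ν x₀)) : ℝ) : ℂ)) := by
    have hexp : Continuous fun t : ℝ => ((Real.exp (-(2 * π) * t) : ℝ) : ℂ) := by fun_prop
    rw [← neg_mul]
    refine ((hexp.tendsto _).comp (tendsto_intervalIntegral_cauchyPDFReal_smul hx₀ hν hcont))
      |>.congr' ?_
    filter_upwards [self_mem_nhdsWithin] with ε (hε : 0 < ε)
    exact (exp_div_exp_eq_exp_integral_cauchyPDFReal hν x₀ hε).symm
  refine ⟨hjump, fun r hr => ?_⟩
  have hval : Real.exp (-(2 * π * ν x₀)) = 1 + ‖r x₀‖ ^ 2 := by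
    rw [hr x₀, show -(2 * π * (-(1 / (2 * π)) * Real.log (1 + ‖r x₀‖ ^ 2)))
      = Real.log (1 + ‖r x₀‖ ^ 2) by field_simp]
    exact Real.exp_log (by positivity)
  rwa [← hval]

/-- Boundary-value jump of `δ(z) = exp( i ∫_{−z₀}^{z₀} ν(s)/(s−z) ds )` across the
segment: if `ν` is bounded measurable on `[−z₀, z₀]` and continuous at
`x₀ ∈ (−z₀, z₀)`, then `lim_{ε→0⁺} δ(x₀+iε)/δ(x₀−iε) = e^{−2πν(x₀)}`.  In particular,
if `ν(s) = −(1/2π) log(1+|r(s)|²)`, the limit equals `1 + |r(x₀)|²`. -/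
theorem stmt_8 (z₀ M : ℝ) (hz₀ : 0 < z₀) (ν : ℝ → ℝ) (hmeas : Measurable ν)
    (hbound : ∀ s ∈ Set.Icc (-z₀) z₀, |ν s| ≤ M)
    (x₀ : ℝ) (hx₀ : x₀ ∈ Set.Ioo (-z₀) z₀) (hcont : ContinuousAt ν x₀) :
    Tendsto
        (fun ε : ℝ =>
          Complex.exp (Complex.I *
              ∫ s in (-z₀)..z₀, (ν s : ℂ) / ((s : ℂ) - ((x₀ : ℂ) + (ε : ℂ) * Complex.I))) /
            Complex.exp (Complex.I *
              ∫ s in (-z₀)..z₀, (ν s : ℂ) / ((s : ℂ) - ((x₀ : ℂ) - (ε : ℂ) * Complex.I))))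
        (nhdsWithin 0 (Set.Ioi 0))
        (nhds ((Real.exp (-(2 * Real.pi * ν x₀)) : ℝ) : ℂ)) ∧
      ∀ r : ℝ → ℂ,
        (∀ s : ℝ, ν s = -(1 / (2 * Real.pi)) * Real.log (1 + ‖r s‖ ^ 2)) →
        Tendsto
          (fun ε : ℝ =>
            Complex.exp (Complex.I *
                ∫ s in (-z₀)..z₀, (ν s : ℂ) / ((s : ℂ) - ((x₀ : ℂ) + (ε : ℂ) * Complex.I))) /
              Complex.exp (Complex.I *
                ∫ s in (-z₀)..z₀, (ν s : ℂ) / ((s : ℂ) - ((x₀ : ℂ) - (ε : ℂ) * Complex.I))))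
          (nhdsWithin 0 (Set.Ioi 0))
          (nhds ((1 + ‖r x₀‖ ^ 2 : ℝ) : ℂ)) :=
  stmt_8_general z₀ M ν hmeas hbound x₀ hx₀ hcont
end

section
/- Let z₀ > 0, let ν : ℝ → ℝ be measurable and bounded on [−z₀, z₀], and let z₁, …, z_N be complex numbers with Im z_k > 0. Define T(z) = ( ∏_{k=1}^N (z − z̄_k)/(z − z_k) ) · exp( i ∫_{−z₀}^{z₀} ν(s)/(s−z) ds ). Then there exist constants C > 0 and R > 0 such that for all complex z with |z| ≥ R, | T(z) − 1 − (i/z)·( 2 ∑_{k=1}^N Im z_k − ∫_{−z₀}^{z₀} ν(s) ds ) | ≤ C / |z|². -/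
/-!
Both factors of `T` are of the form `c + a / z + O(z⁻²)` at infinity, and such expansions
multiply like first-order Taylor polynomials. A Blaschke factor satisfies
`(z - w̄) / (z - w) = 1 + (w - w̄) / z + O(z⁻²)` with `w - w̄ = 2 i Im w`. For the exponential factor,
`1 / (s - z) + 1 / z = s / ((s - z) z)` is `O(z⁻²)` uniformly for `s` in the bounded segment, so the
Cauchy integral is `-(∫ ν) / z + O(z⁻²)`, and `exp u = 1 + u + O(u²)` as `u → 0`.
-/

open Filter Asymptotics Bornology Topology MeasureTheory

def HasInvExpansion (f : ℂ → ℂ) (c a : ℂ) : Prop :=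
  (fun z => f z - c - a / z) =O[cobounded ℂ] fun z => z⁻¹ ^ 2

lemma isBigO_inv_sq_inv : (fun z : ℂ => z⁻¹ ^ 2) =O[cobounded ℂ] fun z => z⁻¹ := by
  have := (isLittleO_pow_pow (𝕜 := ℂ) one_lt_two).isBigO.comp_tendsto tendsto_inv₀_cobounded
  simpa only [Function.comp_def, pow_one] using this

lemma isBigO_const_div (a : ℂ) : (fun z : ℂ => a / z) =O[cobounded ℂ] fun z => z⁻¹ := by
  simpa only [div_eq_mul_inv] using (isBigO_refl (fun z : ℂ => z⁻¹) _).const_mul_left a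

lemma norm_inv_sub_le {w z : ℂ} (h : 2 * ‖w‖ ≤ ‖z‖) : ‖(z - w)⁻¹‖ ≤ 2 * ‖z‖⁻¹ := by
  rcases eq_or_ne z 0 with rfl | hz
  · have hw : w = 0 := norm_le_zero_iff.1 (by linarith [norm_nonneg w, norm_zero (E := ℂ)])
    simp [hw]
  have hzw : ‖z‖ / 2 ≤ ‖z - w‖ := by linarith [norm_sub_norm_le z w]
  rw [norm_inv, ← div_eq_mul_inv, inv_le_comm₀ (by linarith [norm_pos_iff.2 hz]) (by positivity),
    inv_div]
  exact hzw

lemma isBigO_inv_sub (w : ℂ) : (fun z => (z - w)⁻¹) =O[cobounded ℂ] fun z => z⁻¹ := by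
  refine IsBigO.of_bound 2 ?_
  filter_upwards [eventually_cobounded_le_norm (2 * ‖w‖)] with z hz
  simpa using norm_inv_sub_le hz

namespace HasInvExpansion

variable {f g h : ℂ → ℂ} {a b c d : ℂ}

lemma isBigO_sub (hf : HasInvExpansion f c a) :
    (fun z => f z - c) =O[cobounded ℂ] fun z => z⁻¹ := by
  simpa using (IsBigO.trans hf isBigO_inv_sq_inv).add (isBigO_const_div a)

lemma isBigO_one (hf : HasInvExpansion f c a) : f =O[cobounded ℂ] (1 : ℂ → ℂ) :=
  ((hf.isBigO_sub.trans (tendsto_inv₀_cobounded.isBigO_one ℂ)).add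
    (isBigO_const_one ℂ c _)).congr_left fun z => sub_add_cancel (f z) c

lemma mul (hf : HasInvExpansion f c a) (hg : HasInvExpansion g d b) :
    HasInvExpansion (f * g) (c * d) (c * b + a * d) := by
  have key : ∀ z, f z * g z - c * d - (c * b + a * d) / z =
      (f z - c - a / z) * g z + c * (g z - d - b / z) + a / z * (g z - d) := fun z => by ring
  have h1 : (fun z => (f z - c - a / z) * g z) =O[cobounded ℂ] fun z => z⁻¹ ^ 2 := by
    simpa using IsBigO.mul hf hg.isBigO_one
  have h2 : (fun z => a / z * (g z - d)) =O[cobounded ℂ] fun z => z⁻¹ ^ 2 := by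
    simpa only [sq] using (isBigO_const_div a).mul hg.isBigO_sub
  simp only [HasInvExpansion, Pi.mul_apply, key]
  exact (h1.add (IsBigO.const_mul_left hg c)).add h2

lemma one : HasInvExpansion 1 1 0 := by
  simp [HasInvExpansion, isBigO_zero]

lemma prod {ι : Type*} (s : Finset ι) {F : ι → ℂ → ℂ} {A : ι → ℂ}
    (hF : ∀ i ∈ s, HasInvExpansion (F i) 1 (A i)) :
    HasInvExpansion (∏ i ∈ s, F i) 1 (∑ i ∈ s, A i) := by
  classical
  induction s using Finset.induction_on with
  | empty => simpa using one
  | insert i s hi ih =>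
    rw [Finset.prod_insert hi, Finset.sum_insert hi]
    simpa [add_comm] using (hF i (s.mem_insert_self i)).mul
      (ih fun j hj => hF j (Finset.mem_insert_of_mem hj))

lemma const_mul (hf : HasInvExpansion f c a) (k : ℂ) :
    HasInvExpansion (fun z => k * f z) (k * c) (k * a) := by
  have key : ∀ z, k * f z - k * c - k * a / z = k * (f z - c - a / z) := fun z => by ring
  simpa only [HasInvExpansion, key] using IsBigO.const_mul_left hf k

lemma cexp (hh : HasInvExpansion h 0 a) : HasInvExpansion (fun z => Complex.exp (h z)) 1 a := by
  have h_small : h =O[cobounded ℂ] fun z => z⁻¹ := by simpa using hh.isBigO_sub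
  have h_tendsto : Tendsto h (cobounded ℂ) (𝓝 0) := h_small.trans_tendsto tendsto_inv₀_cobounded
  have h_exp : (fun z => Complex.exp (h z) - 1 - h z) =O[cobounded ℂ] fun z => h z ^ 2 := by
    have := (Complex.exp_sub_sum_range_isBigO_pow 2).comp_tendsto h_tendsto
    simpa [Function.comp_def, Finset.sum_range_succ, sub_sub] using this
  have key : ∀ z, Complex.exp (h z) - 1 - a / z =
      (Complex.exp (h z) - 1 - h z) + (h z - 0 - a / z) := fun z => by ring
  simpa only [HasInvExpansion, key] using (h_exp.trans (h_small.pow 2)).add hh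

lemma exists_bound (hf : HasInvExpansion f c a) :
    ∃ C > (0 : ℝ), ∃ R > (0 : ℝ), ∀ z : ℂ, R ≤ ‖z‖ → ‖f z - c - a / z‖ ≤ C / ‖z‖ ^ 2 := by
  obtain ⟨C, hC, hfC⟩ := IsBigO.exists_pos hf
  obtain ⟨R, -, hR⟩ := hasBasis_cobounded_norm.eventually_iff.1 hfC.bound
  refine ⟨C, hC, max R 1, by positivity, fun z hz => ?_⟩
  simpa [div_eq_mul_inv] using hR (le_trans (le_max_left R 1) hz)

end HasInvExpansion

lemma hasInvExpansion_div_sub (c w : ℂ) :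
    HasInvExpansion (fun z => (z - c) / (z - w)) 1 (w - c) := by
  have key : (fun z => (w - c) * w * (z⁻¹ * (z - w)⁻¹)) =ᶠ[cobounded ℂ]
      fun z => (z - c) / (z - w) - 1 - (w - c) / z := by
    filter_upwards [eventually_ne_cobounded 0, eventually_ne_cobounded w] with z hz hzw
    field_simp [sub_ne_zero.2 hzw]
    ring
  refine IsBigO.congr' ?_ key EventuallyEq.rfl
  simpa only [sq] using ((isBigO_refl _ _).mul (isBigO_inv_sub w)).const_mul_left ((w - c) * w)

lemma hasInvExpansion_integral_div_sub {ν : ℝ → ℂ} {a b : ℝ}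
    (hν : IntervalIntegrable ν volume a b) :
    HasInvExpansion (fun z => ∫ s in a..b, ν s / (s - z)) 0 (-∫ s in a..b, ν s) := by
  obtain ⟨r, hr⟩ := (isCompact_uIcc (a := a) (b := b)).isBounded.exists_norm_le
  have hr0 : 0 ≤ r := (norm_nonneg a).trans (hr a Set.left_mem_uIcc)
  refine IsBigO.of_bound (2 * r * |∫ s in a..b, ‖ν s‖|) ?_
  filter_upwards [eventually_cobounded_le_norm (2 * r + 1)] with z hz
  have hz0 : z ≠ 0 := norm_pos_iff.1 (by linarith)
  have hsz : ∀ s ∈ Set.uIcc a b, ‖((s : ℂ) - z)⁻¹‖ ≤ 2 * ‖z‖⁻¹ := fun s hs => by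
    rw [← norm_neg, ← inv_neg, neg_sub]
    refine norm_inv_sub_le ?_
    rw [Complex.norm_real]
    linarith [hr s hs]
  have hne : ∀ s ∈ Set.uIcc a b, (s : ℂ) - z ≠ 0 := fun s hs h => by
    have := hr s hs
    rw [← Complex.norm_real, sub_eq_zero.1 h] at this
    linarith
  have hint : IntervalIntegrable (fun s => ν s / (s - z)) volume a b := by
    simp only [div_eq_mul_inv]
    exact hν.mul_continuousOn (ContinuousOn.inv₀ (by fun_prop) hne)
  have heq : (∫ s in a..b, ν s / (s - z)) - 0 - (-∫ s in a..b, ν s) / z =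
      ∫ s in a..b, ν s * (s * (s - z)⁻¹ * z⁻¹) := by
    rw [sub_zero, neg_div, sub_neg_eq_add, ← intervalIntegral.integral_div,
      ← intervalIntegral.integral_add hint (hν.div_const z)]
    refine intervalIntegral.integral_congr fun s hs => ?_
    field_simp [hne s hs, hz0]
    ring
  rw [heq]
  calc _ ≤ |∫ s in a..b, ‖ν s‖ * (2 * r * ‖z‖⁻¹ ^ 2)| := by
        refine intervalIntegral.norm_integral_le_abs_of_norm_le
          (ae_restrict_of_forall_mem measurableSet_uIoc fun s hs => ?_) (hν.norm.mul_const _)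
        have hs := Set.uIoc_subset_uIcc hs
        rw [norm_mul, norm_mul, norm_mul, norm_inv z, Complex.norm_real]
        calc ‖ν s‖ * (‖s‖ * ‖((s : ℂ) - z)⁻¹‖ * ‖z‖⁻¹)
            ≤ ‖ν s‖ * (r * (2 * ‖z‖⁻¹) * ‖z‖⁻¹) := by
              gcongr
              exacts [hr s hs, hsz s hs]
          _ = ‖ν s‖ * (2 * r * ‖z‖⁻¹ ^ 2) := by ring
    _ = 2 * r * |∫ s in a..b, ‖ν s‖| * ‖z⁻¹ ^ 2‖ := by
        rw [intervalIntegral.integral_mul_const, abs_mul,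
          abs_of_nonneg (a := 2 * r * ‖z‖⁻¹ ^ 2) (by positivity), norm_pow, norm_inv]
        ring

theorem stmt_10_general (z₀ : ℝ) (hz₀ : 0 < z₀) (ν : ℝ → ℝ) (hmeas : Measurable ν)
    (M : ℝ) (hbound : ∀ s ∈ Set.Icc (-z₀) z₀, |ν s| ≤ M)
    (N : ℕ) (zk : Fin N → ℂ) :
    ∃ C > (0 : ℝ), ∃ R > (0 : ℝ), ∀ z : ℂ, R ≤ ‖z‖ →
      ‖(∏ k, (z - (starRingEnd ℂ) (zk k)) / (z - zk k)) *
              Complex.exp (Complex.I * ∫ s in (-z₀)..z₀, (ν s : ℂ) / ((s : ℂ) - z)) -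
            1 -
            Complex.I / z *
              ((2 * (∑ k, (zk k).im) - ∫ s in (-z₀)..z₀, ν s : ℝ) : ℂ)‖ ≤
        C / ‖z‖ ^ 2 := by
  have hν : IntervalIntegrable (fun s => (ν s : ℂ)) volume (-z₀) z₀ :=
    (intervalIntegrable_const (c := M)).mono_fun' (by fun_prop)
      (ae_restrict_of_forall_mem measurableSet_uIoc fun s hs => by
        rw [Set.uIoc_of_le (by linarith)] at hs
        simpa using hbound s (Set.Ioc_subset_Icc_self hs))
  have hP := HasInvExpansion.prod Finset.univ fun k _ =>
    hasInvExpansion_div_sub ((starRingEnd ℂ) (zk k)) (zk k)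
  have hJ := (hasInvExpansion_integral_div_sub hν).const_mul Complex.I
  rw [mul_zero] at hJ
  obtain ⟨C, hC, R, hR, hT⟩ := (hP.mul hJ.cexp).exists_bound
  have hcoeff : Complex.I * (-∫ s in (-z₀)..z₀, (ν s : ℂ)) +
      ∑ k, (zk k - (starRingEnd ℂ) (zk k)) =
      Complex.I * ((2 * (∑ k, (zk k).im) - ∫ s in (-z₀)..z₀, ν s : ℝ) : ℂ) := by
    simp only [Complex.sub_conj, intervalIntegral.integral_ofReal, ← Finset.sum_mul]
    push_cast [← Finset.mul_sum]
    ring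
  refine ⟨C, hC, R, hR, fun z hz => ?_⟩
  rw [div_mul_eq_mul_div]
  simpa only [Pi.mul_apply, Finset.prod_apply, one_mul, mul_one, hcoeff] using hT z hz

/-- Large-`z` expansion of the conjugating function
`T(z) = ( ∏_{k=1}^N (z − z̄_k)/(z − z_k) ) · exp( i ∫_{−z₀}^{z₀} ν(s)/(s−z) ds )`:
there are `C > 0`, `R > 0` with
`| T(z) − 1 − (i/z)(2 ∑ Im z_k − ∫_{−z₀}^{z₀} ν) | ≤ C/|z|²` whenever `|z| ≥ R`. -/
theorem stmt_10 (z₀ : ℝ) (hz₀ : 0 < z₀) (ν : ℝ → ℝ) (hmeas : Measurable ν)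
    (M : ℝ) (hbound : ∀ s ∈ Set.Icc (-z₀) z₀, |ν s| ≤ M)
    (N : ℕ) (zk : Fin N → ℂ) (hzk : ∀ k, 0 < (zk k).im) :
    ∃ C > (0 : ℝ), ∃ R > (0 : ℝ), ∀ z : ℂ, R ≤ ‖z‖ →
      ‖(∏ k, (z - (starRingEnd ℂ) (zk k)) / (z - zk k)) *
              Complex.exp (Complex.I * ∫ s in (-z₀)..z₀, (ν s : ℂ) / ((s : ℂ) - z)) -
            1 -
            Complex.I / z *
              ((2 * (∑ k, (zk k).im) - ∫ s in (-z₀)..z₀, ν s : ℝ) : ℂ)‖ ≤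
        C / ‖z‖ ^ 2 :=
  stmt_10_general z₀ hz₀ ν hmeas M hbound N zk
end

section
/- For every ε > 0 there exists a constant C > 0 such that for all z₀ > 0, all real t ≥ 1, all complex numbers z = x + iy, and all g ∈ L²(ℝ), ∫_0^{∞} e^{−tεv/2} ( ∫_{v+z₀}^{∞} |g(u)| · |u + iv − z|^{−1} du ) dv ≤ C ‖g‖_{L²(ℝ)} · t^{−1/6}. -/
/-!
Cauchy–Schwarz in `u` bounds the inner integral by `‖g‖₂` times the `L²` norm of the kernel
`u ↦ 1 / |u + iv - z|`, which is `√(π / |v - Im z|)`. It remains to integrate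
`e^{-av} |v - Im z|^{-1/2}` over `v > 0`, where `a = tε/2`: on the window `|v - Im z| < 1/a` drop
the exponential, off it bound the power by `a^{1/2}`. This gives `5 a^{-1/2}`, so the left-hand
side is in fact `O(t^{-1/2})`.
-/

open MeasureTheory Set Filter

theorem integral_abs_mul_abs_le_eLpNorm_mul_eLpNorm {α : Type*} [MeasurableSpace α]
    {μ : Measure α} {f k : α → ℝ} (hf : MemLp f 2 μ) (hk : MemLp k 2 μ) :
    ∫ x, |f x| * |k x| ∂μ ≤ (eLpNorm f 2 μ).toReal * (eLpNorm k 2 μ).toReal := by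
  have h2 : ENNReal.ofReal 2 = 2 := by norm_num
  have := integral_mul_norm_le_Lp_mul_Lq Real.HolderConjugate.two_two (h2 ▸ hf) (h2 ▸ hk)
  rw [hf.eLpNorm_eq_integral_rpow_norm two_ne_zero ENNReal.ofNat_ne_top,
    hk.eLpNorm_eq_integral_rpow_norm two_ne_zero ENNReal.ofNat_ne_top,
    ENNReal.toReal_ofReal (by positivity), ENNReal.toReal_ofReal (by positivity)]
  simpa [one_div] using this

theorem MemLp.toReal_eLpNorm_two_eq_sqrt_integral_sq {α : Type*} [MeasurableSpace α]
    {μ : Measure α} {f : α → ℝ} (hf : MemLp f 2 μ) :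
    (eLpNorm f 2 μ).toReal = √(∫ x, f x ^ 2 ∂μ) := by
  rw [hf.eLpNorm_eq_integral_rpow_norm two_ne_zero ENNReal.ofNat_ne_top,
    ENNReal.toReal_ofReal (by positivity), Real.sqrt_eq_rpow]
  simp [one_div]

theorem norm_ofReal_add_ofReal_mul_I_sub_sq (u v : ℝ) (z : ℂ) :
    ‖(u : ℂ) + v * Complex.I - z‖ ^ 2 = (u - z.re) ^ 2 + (v - z.im) ^ 2 := by
  have h : (u : ℂ) + v * Complex.I - z =
      ((u - z.re : ℝ) : ℂ) + ((v - z.im : ℝ) : ℂ) * Complex.I := by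
    apply Complex.ext <;> simp
  rw [h, ← Complex.normSq_eq_norm_sq, Complex.normSq_add_mul_I]

theorem integrable_inv_sub_sq_add_sq (x : ℝ) {c : ℝ} (hc : c ≠ 0) :
    Integrable fun u : ℝ => ((u - x) ^ 2 + c ^ 2)⁻¹ := by
  have h := ((integrable_inv_one_add_sq.comp_div hc).const_mul (c ^ 2)⁻¹).comp_sub_right x
  refine h.congr (Eventually.of_forall fun u => ?_)
  field_simp
  ring

theorem integral_inv_sub_sq_add_sq (x : ℝ) {c : ℝ} (hc : c ≠ 0) :
    ∫ u : ℝ, ((u - x) ^ 2 + c ^ 2)⁻¹ = Real.pi / |c| := by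
  have hscale : (fun w : ℝ => (w ^ 2 + c ^ 2)⁻¹) = fun w => (c ^ 2)⁻¹ * (1 + (w / c) ^ 2)⁻¹ := by
    funext w
    field_simp
    ring
  rw [integral_sub_right_eq_self (fun u => (u ^ 2 + c ^ 2)⁻¹) x, hscale, integral_const_mul,
    Measure.integral_comp_div (fun w => (1 + w ^ 2)⁻¹) c, integral_univ_inv_one_add_sq,
    smul_eq_mul, ← sq_abs c]
  field_simp

theorem memLp_inv_norm_ofReal_add_ofReal_mul_I_sub {v : ℝ} {z : ℂ} (hv : v ≠ z.im) :
    MemLp (fun u : ℝ => ‖(u : ℂ) + v * Complex.I - z‖⁻¹) 2 volume := by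
  have hc : v - z.im ≠ 0 := sub_ne_zero.mpr hv
  have hcont : Continuous fun u : ℝ => ‖(u : ℂ) + v * Complex.I - z‖⁻¹ := by
    refine Continuous.inv₀ (by fun_prop) fun u h => hc ?_
    have := norm_ofReal_add_ofReal_mul_I_sub_sq u v z
    rw [h] at this
    nlinarith [sq_nonneg (u - z.re), sq_nonneg (v - z.im)]
  rw [memLp_two_iff_integrable_sq hcont.aestronglyMeasurable]
  simpa only [inv_pow, norm_ofReal_add_ofReal_mul_I_sub_sq] using
    integrable_inv_sub_sq_add_sq z.re hc

theorem toReal_eLpNorm_inv_norm_ofReal_add_ofReal_mul_I_sub {v : ℝ} {z : ℂ} (hv : v ≠ z.im) :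
    (eLpNorm (fun u : ℝ => ‖(u : ℂ) + v * Complex.I - z‖⁻¹) 2 volume).toReal =
      √(Real.pi / |v - z.im|) := by
  rw [MemLp.toReal_eLpNorm_two_eq_sqrt_integral_sq (memLp_inv_norm_ofReal_add_ofReal_mul_I_sub hv)]
  simp only [inv_pow, norm_ofReal_add_ofReal_mul_I_sub_sq]
  rw [integral_inv_sub_sq_add_sq z.re (sub_ne_zero.mpr hv)]

theorem setIntegral_abs_div_norm_ofReal_add_ofReal_mul_I_sub_le {g : ℝ → ℝ}
    (hg : MemLp g 2 volume) (s : Set ℝ) {v : ℝ} {z : ℂ} (hv : v ≠ z.im) :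
    ∫ u in s, |g u| / ‖(u : ℂ) + v * Complex.I - z‖ ≤
      (eLpNorm g 2 volume).toReal * (√Real.pi * |v - z.im| ^ (-(1 / 2) : ℝ)) := by
  set k := fun u : ℝ => ‖(u : ℂ) + v * Complex.I - z‖⁻¹
  have hk := memLp_inv_norm_ofReal_add_ofReal_mul_I_sub hv
  calc ∫ u in s, |g u| / ‖(u : ℂ) + v * Complex.I - z‖ = ∫ u in s, |g u| * |k u| := by
        simp [k, div_eq_mul_inv]
    _ ≤ (eLpNorm g 2 (volume.restrict s)).toReal * (eLpNorm k 2 (volume.restrict s)).toReal :=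
        integral_abs_mul_abs_le_eLpNorm_mul_eLpNorm (hg.restrict s) (hk.restrict s)
    _ ≤ (eLpNorm g 2 volume).toReal * (eLpNorm k 2 volume).toReal := by
        gcongr
        exacts [hg.eLpNorm_ne_top, Measure.restrict_le_self, hk.eLpNorm_ne_top,
          Measure.restrict_le_self]
    _ = _ := by
        rw [toReal_eLpNorm_inv_norm_ofReal_add_ofReal_mul_I_sub hv, Real.sqrt_div Real.pi_pos.le,
          div_eq_mul_inv, Real.sqrt_eq_rpow |v - z.im|, ← Real.rpow_neg (abs_nonneg _)]

theorem intervalIntegrable_abs_rpow {r : ℝ} (hr : -1 < r) (a b : ℝ) :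
    IntervalIntegrable (fun w : ℝ => |w| ^ r) volume a b := by
  have hpos : ∀ c, 0 ≤ c → IntervalIntegrable (fun w : ℝ => |w| ^ r) volume 0 c := fun c hc =>
    (intervalIntegral.intervalIntegrable_rpow' hr).congr fun w hw => by
      rw [uIoc_of_le hc] at hw
      simp only [abs_of_pos hw.1]
  have hall : ∀ c, IntervalIntegrable (fun w : ℝ => |w| ^ r) volume 0 c := by
    intro c
    rcases le_total 0 c with hc | hc
    · exact hpos c hc
    · simpa using (IntervalIntegrable.iff_comp_neg).mp (hpos (-c) (neg_nonneg.mpr hc))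
  exact (hall a).symm.trans (hall b)

theorem integral_abs_rpow_zero_left {r δ : ℝ} (hr : -1 < r) (hδ : 0 ≤ δ) :
    ∫ w in (0 : ℝ)..δ, |w| ^ r = δ ^ (r + 1) / (r + 1) := by
  have hEq : EqOn (fun w : ℝ => |w| ^ r) (fun w => w ^ r) (uIcc 0 δ) := fun w hw => by
    rw [uIcc_of_le hδ] at hw
    simp only [abs_of_nonneg hw.1]
  rw [intervalIntegral.integral_congr hEq, integral_rpow (Or.inl hr),
    Real.zero_rpow (by linarith)]
  ring

theorem integral_abs_rpow_neg_self {r δ : ℝ} (hr : -1 < r) (hδ : 0 ≤ δ) :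
    ∫ w in -δ..δ, |w| ^ r = 2 * (δ ^ (r + 1) / (r + 1)) := by
  rw [← intervalIntegral.integral_add_adjacent_intervals (intervalIntegrable_abs_rpow hr _ 0)
    (intervalIntegrable_abs_rpow hr 0 _)]
  have hleft : ∫ w in -δ..0, |w| ^ r = ∫ w in (0 : ℝ)..δ, |w| ^ r := by
    simpa using (intervalIntegral.integral_comp_neg (a := 0) (b := δ) (fun w : ℝ => |w| ^ r)).symm
  rw [hleft, integral_abs_rpow_zero_left hr hδ]
  ring

theorem integrable_indicator_Ioo_abs_rpow {r : ℝ} (hr : -1 < r) (δ : ℝ) :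
    Integrable ((Ioo (-δ) δ).indicator fun w : ℝ => |w| ^ r) := by
  rw [integrable_indicator_iff measurableSet_Ioo]
  rcases le_total (-δ) δ with hδ | hδ
  · exact (intervalIntegrable_iff_integrableOn_Ioo_of_le hδ).mp (intervalIntegrable_abs_rpow hr _ _)
  · simp [Ioo_eq_empty_of_le hδ]

theorem integral_indicator_Ioo_abs_rpow {r δ : ℝ} (hr : -1 < r) (hδ : 0 ≤ δ) :
    ∫ w, (Ioo (-δ) δ).indicator (fun w : ℝ => |w| ^ r) w = 2 * (δ ^ (r + 1) / (r + 1)) := by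
  rw [integral_indicator measurableSet_Ioo, ← integral_Ioc_eq_integral_Ioo,
    ← intervalIntegral.integral_of_le (by linarith), integral_abs_rpow_neg_self hr hδ]

theorem abs_rpow_le_add_indicator_Ioo {r δ : ℝ} (hr : r ≤ 0) (hδ : 0 < δ) (w : ℝ) :
    |w| ^ r ≤ δ ^ r + (Ioo (-δ) δ).indicator (fun w : ℝ => |w| ^ r) w := by
  by_cases hw : |w| < δ
  · rw [indicator_of_mem (show w ∈ Ioo (-δ) δ from abs_lt.mp hw)]
    linarith [Real.rpow_nonneg hδ.le r]
  · have : 0 ≤ (Ioo (-δ) δ).indicator (fun w : ℝ => |w| ^ r) w :=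
      indicator_nonneg (fun w _ => Real.rpow_nonneg (abs_nonneg w) r) w
    linarith [Real.rpow_le_rpow_of_nonpos hδ (not_lt.mp hw) hr]

section ExpWeight

variable {a r : ℝ}

theorem exp_mul_abs_rpow_le (ha : 0 < a) (hr : r ≤ 0) {v : ℝ} (hv : 0 ≤ v) (y : ℝ) :
    Real.exp (-a * v) * |v - y| ^ r ≤
      a ^ (-r) * Real.exp (-a * v) + (Ioo (-a⁻¹) a⁻¹).indicator (fun w => |w| ^ r) (v - y) := by
  have hexp : Real.exp (-a * v) ≤ 1 := Real.exp_le_one_iff.mpr (by nlinarith)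
  have hind : 0 ≤ (Ioo (-a⁻¹) a⁻¹).indicator (fun w : ℝ => |w| ^ r) (v - y) :=
    indicator_nonneg (fun w _ => Real.rpow_nonneg (abs_nonneg w) r) _
  have hsplit := abs_rpow_le_add_indicator_Ioo hr (inv_pos.mpr ha) (v - y)
  rw [Real.inv_rpow ha.le, ← Real.rpow_neg ha.le] at hsplit
  calc Real.exp (-a * v) * |v - y| ^ r
      ≤ Real.exp (-a * v) * (a ^ (-r) + (Ioo (-a⁻¹) a⁻¹).indicator (fun w => |w| ^ r) (v - y)) :=
        mul_le_mul_of_nonneg_left hsplit (Real.exp_pos _).le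
    _ ≤ _ := by nlinarith

theorem integrableOn_exp_mul_abs_rpow_majorant (ha : 0 < a) (hr : -1 < r) (y : ℝ) :
    IntegrableOn (fun v => a ^ (-r) * Real.exp (-a * v) +
      (Ioo (-a⁻¹) a⁻¹).indicator (fun w => |w| ^ r) (v - y)) (Ioi 0) :=
  ((integrableOn_exp_mul_Ioi (neg_neg_of_pos ha) 0).const_mul _).add
    ((integrable_indicator_Ioo_abs_rpow hr _).comp_sub_right y).integrableOn

theorem integrableOn_exp_mul_abs_rpow (ha : 0 < a) (hr : -1 < r) (hr0 : r ≤ 0) (y : ℝ) :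
    IntegrableOn (fun v => Real.exp (-a * v) * |v - y| ^ r) (Ioi 0) := by
  refine (integrableOn_exp_mul_abs_rpow_majorant ha hr y).mono' (by fun_prop) ?_
  filter_upwards [ae_restrict_mem measurableSet_Ioi] with v hv
  rw [Real.norm_of_nonneg (by positivity)]
  exact exp_mul_abs_rpow_le ha hr0 (le_of_lt hv) y

theorem setIntegral_exp_mul_abs_rpow_le (ha : 0 < a) (hr : -1 < r) (hr0 : r ≤ 0) (y : ℝ) :
    ∫ v in Ioi 0, Real.exp (-a * v) * |v - y| ^ r ≤ (1 + 2 / (r + 1)) * a ^ (-(r + 1)) := by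
  have hind := integrable_indicator_Ioo_abs_rpow hr a⁻¹
  calc ∫ v in Ioi 0, Real.exp (-a * v) * |v - y| ^ r
      ≤ ∫ v in Ioi 0, (a ^ (-r) * Real.exp (-a * v) +
          (Ioo (-a⁻¹) a⁻¹).indicator (fun w => |w| ^ r) (v - y)) :=
        setIntegral_mono_on (integrableOn_exp_mul_abs_rpow ha hr hr0 y)
          (integrableOn_exp_mul_abs_rpow_majorant ha hr y) measurableSet_Ioi
          fun v hv => exp_mul_abs_rpow_le ha hr0 (le_of_lt hv) y
    _ = a ^ (-r) * a⁻¹ + ∫ v in Ioi 0, (Ioo (-a⁻¹) a⁻¹).indicator (fun w => |w| ^ r) (v - y) := by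
        rw [integral_add ((integrableOn_exp_mul_Ioi (neg_neg_of_pos ha) 0).const_mul _)
          (hind.comp_sub_right y).integrableOn, integral_const_mul,
          integral_exp_mul_Ioi (neg_neg_of_pos ha)]
        simp only [mul_zero, Real.exp_zero]
        ring
    _ ≤ a ^ (-r) * a⁻¹ + ∫ v, (Ioo (-a⁻¹) a⁻¹).indicator (fun w => |w| ^ r) (v - y) :=
        add_le_add le_rfl (setIntegral_le_integral (hind.comp_sub_right y)
          (Eventually.of_forall fun v =>
            indicator_nonneg (fun w _ => Real.rpow_nonneg (abs_nonneg w) r) _))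
    _ = (1 + 2 / (r + 1)) * a ^ (-(r + 1)) := by
        rw [integral_sub_right_eq_self (fun v => (Ioo (-a⁻¹) a⁻¹).indicator (fun w => |w| ^ r) v),
          integral_indicator_Ioo_abs_rpow hr (inv_pos.mpr ha).le, Real.inv_rpow ha.le,
          ← Real.rpow_neg ha.le, ← Real.rpow_neg_one, ← Real.rpow_add ha]
        ring_nf

end ExpWeight

/-- Appendix-B estimate for `I₁` and `I₂`: for every `ε > 0` there is `C > 0` such that
for all `z₀ > 0`, `t ≥ 1`, all `z ∈ ℂ` and all `g ∈ L²(ℝ)`,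
`∫_0^∞ e^{−tεv/2} ( ∫_{v+z₀}^∞ |g(u)| / |u + iv − z| du ) dv ≤ C ‖g‖_{L²} t^{−1/6}`. -/
theorem stmt_18 :
    ∀ ε > (0 : ℝ), ∃ C > (0 : ℝ), ∀ z₀ > (0 : ℝ), ∀ t ≥ (1 : ℝ), ∀ z : ℂ, ∀ g : ℝ → ℝ,
      MemLp g 2 volume →
      (∫ v in Set.Ioi (0 : ℝ), Real.exp (-(t * ε * v / 2)) *
          ∫ u in Set.Ioi (v + z₀),
            |g u| / ‖(u : ℂ) + (v : ℂ) * Complex.I - z‖) ≤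
        C * (eLpNorm g 2 volume).toReal * t ^ (-(1 / 6) : ℝ) := by
  intro ε hε
  refine ⟨5 * √Real.pi * (ε / 2) ^ (-(1 / 2) : ℝ), by positivity, ?_⟩
  intro z₀ _ t ht z g hg
  set M := (eLpNorm g 2 volume).toReal
  set a := t * (ε / 2)
  have ha : 0 < a := by positivity
  have hbound : ∀ᵐ v ∂volume.restrict (Ioi 0), Real.exp (-(t * ε * v / 2)) *
      ∫ u in Ioi (v + z₀), |g u| / ‖(u : ℂ) + (v : ℂ) * Complex.I - z‖ ≤
        M * √Real.pi * (Real.exp (-a * v) * |v - z.im| ^ (-(1 / 2) : ℝ)) := by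
    filter_upwards [ae_restrict_of_ae (Measure.ae_ne volume z.im)] with v hv
    rw [show -(t * ε * v / 2) = -a * v by ring]
    calc _ ≤ Real.exp (-a * v) * (M * (√Real.pi * |v - z.im| ^ (-(1 / 2) : ℝ))) :=
          mul_le_mul_of_nonneg_left
            (setIntegral_abs_div_norm_ofReal_add_ofReal_mul_I_sub_le hg _ hv) (Real.exp_pos _).le
      _ = _ := by ring
  calc _ ≤ ∫ v in Ioi 0, M * √Real.pi * (Real.exp (-a * v) * |v - z.im| ^ (-(1 / 2) : ℝ)) :=
        integral_mono_of_nonneg (Eventually.of_forall fun v => by positivity)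
          ((integrableOn_exp_mul_abs_rpow ha (by norm_num) (by norm_num) _).const_mul _) hbound
    _ = M * √Real.pi * ∫ v in Ioi 0, Real.exp (-a * v) * |v - z.im| ^ (-(1 / 2) : ℝ) :=
        integral_const_mul _ _
    _ ≤ M * √Real.pi * ((1 + 2 / (-(1 / 2) + 1)) * a ^ (-(-(1 / 2) + 1) : ℝ)) := by
        gcongr
        exact setIntegral_exp_mul_abs_rpow_le ha (by norm_num) (by norm_num) _
    _ = 5 * √Real.pi * (ε / 2) ^ (-(1 / 2) : ℝ) * M * t ^ (-(1 / 2) : ℝ) := by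
        rw [Real.mul_rpow (by linarith) (by positivity),
          show -(-(1 / 2) + 1 : ℝ) = -(1 / 2) by norm_num]
        ring
    _ ≤ 5 * √Real.pi * (ε / 2) ^ (-(1 / 2) : ℝ) * M * t ^ (-(1 / 6) : ℝ) := by
        gcongr
        norm_num
end

section
/- For every ε > 0 there exists a constant C > 0 such that for all z₀ > 0, all real t ≥ 1, and all complex numbers z, ∫_0^{∞} ∫_{v+z₀}^{∞} ( (u − z₀)² + v² )^{−1/4} · e^{−tεv/2} · |u + iv − z|^{−1} du dv ≤ C t^{−1/2}. -/
/-!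
By Young's inequality with exponents `3` and `3/2`, the integrand is at most
`e^{-cv} (|s - z₀|^{-3/2} + |s - z|^{-3/2})` with `c = tε/2`. Extending the inner integral to
all of `ℝ` and scaling, `∫ ((u - x)² + d²)^{-3/4} du = K |d|^{-1/2}`, so the double integral is
at most `K ∫₀^∞ e^{-cv} (|v|^{-1/2} + |v - Im z|^{-1/2}) dv`. Splitting `|v - y|^{-1/2}` into its
part on `|v - y| < 1/c` and the bounded remainder `c^{1/2}` gives `∫₀^∞ e^{-cv} |v - y|^{-1/2} dv
≤ 5 c^{-1/2}` uniformly in `y`, whence the bound `10 K (ε/2)^{-1/2} t^{-1/2}`.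
-/

open MeasureTheory Set Real Metric

lemma rpow_neg_quarter_mul_rpow_neg_half_le {X Y : ℝ} (hX : 0 ≤ X) (hY : 0 ≤ Y) :
    X ^ (-(1 / 4) : ℝ) * Y ^ (-(1 / 2) : ℝ) ≤ X ^ (-(3 / 4) : ℝ) + Y ^ (-(3 / 4) : ℝ) := by
  have hpq : (3 : ℝ).HolderConjugate (3 / 2) := holderConjugate_iff.mpr ⟨by norm_num, by norm_num⟩
  have young := young_inequality_of_nonneg (rpow_nonneg hX (-(1 / 4) : ℝ))
    (rpow_nonneg hY (-(1 / 2) : ℝ)) hpq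
  rw [← rpow_mul hX, ← rpow_mul hY] at young
  norm_num at young
  nlinarith [rpow_nonneg hX (-(3 / 4) : ℝ), rpow_nonneg hY (-(3 / 4) : ℝ)]

noncomputable def lorentzIntegral (s : ℝ) : ℝ := ∫ t : ℝ, (1 + t ^ 2) ^ (-s)

lemma integrable_one_add_sq_rpow_neg {s : ℝ} (hs : 1 / 2 < s) :
    Integrable fun t : ℝ => (1 + t ^ 2) ^ (-s) := by
  have h := integrable_rpow_neg_one_add_norm_sq (E := ℝ) (μ := volume) (r := 2 * s)
    (by simp only [Module.finrank_self, Nat.cast_one]; linarith)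
  simpa [neg_div, sq_abs] using h

lemma lorentzIntegral_pos {s : ℝ} (hs : 1 / 2 < s) : 0 < lorentzIntegral s := by
  rw [lorentzIntegral, integral_pos_iff_support_of_nonneg (fun t => by positivity)
    (integrable_one_add_sq_rpow_neg hs)]
  have hpos (t : ℝ) : (1 + t ^ 2) ^ (-s) ≠ 0 := (rpow_pos_of_pos (by positivity) _).ne'
  simp [Function.support, hpos]

lemma sub_sq_add_sq_rpow_neg_eq_mul (x u s : ℝ) {d : ℝ} (hd : d ≠ 0) :
    ((u - x) ^ 2 + d ^ 2) ^ (-s) = |d| ^ (-2 * s) * (1 + (d⁻¹ * (u - x)) ^ 2) ^ (-s) := by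
  have hfactor : (u - x) ^ 2 + d ^ 2 = |d| ^ (2 : ℝ) * (1 + (d⁻¹ * (u - x)) ^ 2) := by
    rw [rpow_two, sq_abs]; field_simp; ring
  rw [hfactor, mul_rpow (by positivity) (by positivity), ← rpow_mul (abs_nonneg d)]
  ring_nf

lemma integrable_sub_sq_add_sq_rpow_neg (x : ℝ) {d s : ℝ} (hd : d ≠ 0) (hs : 1 / 2 < s) :
    Integrable fun u : ℝ => ((u - x) ^ 2 + d ^ 2) ^ (-s) := by
  have h := (((integrable_one_add_sq_rpow_neg hs).comp_mul_left' (inv_ne_zero hd)).comp_sub_right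
    x).const_mul (|d| ^ (-2 * s))
  simpa only [Function.comp_def, ← sub_sq_add_sq_rpow_neg_eq_mul x _ s hd] using h

lemma integral_sub_sq_add_sq_rpow_neg (x s : ℝ) {d : ℝ} (hd : d ≠ 0) :
    ∫ u : ℝ, ((u - x) ^ 2 + d ^ 2) ^ (-s) = lorentzIntegral s * |d| ^ (1 - 2 * s) := by
  simp only [sub_sq_add_sq_rpow_neg_eq_mul x _ s hd, integral_const_mul,
    integral_sub_right_eq_self (fun u => (1 + (d⁻¹ * u) ^ 2) ^ (-s)) x,
    Measure.integral_comp_mul_left (fun t => (1 + t ^ 2) ^ (-s)), inv_inv, smul_eq_mul]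
  rw [← lorentzIntegral, show 1 - 2 * s = -2 * s + 1 by ring, rpow_add_one (abs_ne_zero.mpr hd)]
  ring

lemma integrable_indicator_ball_abs_rpow {r : ℝ} (hr : -1 < r) (δ : ℝ) :
    Integrable ((ball (0 : ℝ) δ).indicator fun w => |w| ^ r) := by
  rw [integrable_indicator_iff measurableSet_ball]
  refine integrableOn_ball_of_norm_le_rpow (C := 1) (α := -r) (by simp) (by simp; linarith)
    (Filter.Eventually.of_forall fun w => ?_)
    (measurable_id.abs.pow_const r).aestronglyMeasurable
  simp [abs_of_nonneg (rpow_nonneg (abs_nonneg w) r)]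

lemma integral_indicator_ball_abs_rpow {r δ : ℝ} (hr : -1 < r) (hδ : 0 ≤ δ) :
    ∫ w, (ball (0 : ℝ) δ).indicator (fun w => |w| ^ r) w = 2 * δ ^ (r + 1) / (r + 1) := by
  have hball : (ball (0 : ℝ) δ).indicator (fun w => |w| ^ r)
      = fun w => (Iio δ).indicator (fun w => w ^ r) |w| := by
    ext w; simp [indicator, Real.norm_eq_abs]
  rw [hball, integral_comp_abs, integral_indicator measurableSet_Iio, Measure.restrict_restrict
    measurableSet_Iio, Iio_inter_Ioi, ← integral_Ioc_eq_integral_Ioo,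
    ← intervalIntegral.integral_of_le hδ, integral_rpow (Or.inl hr),
    zero_rpow (by linarith)]
  ring

lemma abs_rpow_le_indicator_ball_add {r δ : ℝ} (hr : r ≤ 0) (hδ : 0 < δ) (w : ℝ) :
    |w| ^ r ≤ (ball (0 : ℝ) δ).indicator (fun w => |w| ^ r) w + δ ^ r := by
  by_cases hw : w ∈ ball (0 : ℝ) δ
  · rw [indicator_of_mem hw]
    linarith [rpow_nonneg hδ.le r]
  · rw [indicator_of_notMem hw, zero_add]
    exact rpow_le_rpow_of_nonpos hδ (by simpa using hw) hr

lemma exp_neg_mul_mul_abs_sub_rpow_le {c r δ v : ℝ} (y : ℝ) (hc : 0 ≤ c) (hr : r ≤ 0)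
    (hδ : 0 < δ) (hv : 0 ≤ v) :
    exp (-c * v) * |v - y| ^ r
      ≤ (ball (0 : ℝ) δ).indicator (fun w => |w| ^ r) (v - y) + δ ^ r * exp (-c * v) := by
  have hexp : exp (-c * v) ≤ 1 := exp_le_one_iff.mpr (by nlinarith)
  have hind : 0 ≤ (ball (0 : ℝ) δ).indicator (fun w => |w| ^ r) (v - y) :=
    indicator_nonneg (fun w _ => rpow_nonneg (abs_nonneg w) r) _
  calc exp (-c * v) * |v - y| ^ r
      ≤ exp (-c * v) * ((ball (0 : ℝ) δ).indicator (fun w => |w| ^ r) (v - y) + δ ^ r) :=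
        mul_le_mul_of_nonneg_left (abs_rpow_le_indicator_ball_add hr hδ _) (exp_pos _).le
    _ ≤ _ := by nlinarith [exp_pos (-c * v)]

section ExpWeighted

variable {c r : ℝ} (y : ℝ)

lemma integrableOn_exp_neg_mul_mul_abs_sub_rpow (hc : 0 < c) (hr₀ : -1 < r) (hr : r ≤ 0) :
    IntegrableOn (fun v => exp (-c * v) * |v - y| ^ r) (Ioi 0) := by
  have hmajorant :=
    ((integrable_indicator_ball_abs_rpow hr₀ 1).comp_sub_right y).integrableOn.add
      ((integrableOn_exp_mul_Ioi (neg_neg_of_pos hc) 0).const_mul ((1 : ℝ) ^ r))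
  refine hmajorant.mono' (by fun_prop) ((ae_restrict_iff' measurableSet_Ioi).mpr
    (Filter.Eventually.of_forall fun v hv => ?_))
  rw [norm_of_nonneg (by positivity)]
  exact exp_neg_mul_mul_abs_sub_rpow_le y hc.le hr one_pos (le_of_lt hv)

lemma setIntegral_exp_neg_mul_mul_abs_sub_rpow_le (hc : 0 < c) (hr₀ : -1 < r) (hr : r ≤ 0) :
    ∫ v in Ioi 0, exp (-c * v) * |v - y| ^ r ≤ (2 / (r + 1) + 1) * c ^ (-(r + 1)) := by
  set φ := (ball (0 : ℝ) c⁻¹).indicator fun w => |w| ^ r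
  have hφ : Integrable fun v => φ (v - y) :=
    (integrable_indicator_ball_abs_rpow hr₀ c⁻¹).comp_sub_right y
  have hexp : IntegrableOn (fun v => c⁻¹ ^ r * exp (-c * v)) (Ioi 0) :=
    (integrableOn_exp_mul_Ioi (neg_neg_of_pos hc) 0).const_mul _
  have hφ_le : ∫ v in Ioi 0, φ (v - y) ≤ 2 * c⁻¹ ^ (r + 1) / (r + 1) := by
    calc ∫ v in Ioi 0, φ (v - y) ≤ ∫ v, φ (v - y) := setIntegral_le_integral hφ
          (Filter.Eventually.of_forall fun v => indicator_nonneg (fun w _ => by positivity) _)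
      _ = _ := by rw [integral_sub_right_eq_self φ y,
          integral_indicator_ball_abs_rpow hr₀ (inv_nonneg.mpr hc.le)]
  have hexp_eq : ∫ v in Ioi 0, c⁻¹ ^ r * exp (-c * v) = c⁻¹ ^ r * c⁻¹ := by
    rw [integral_const_mul, integral_exp_mul_Ioi (neg_neg_of_pos hc)]
    field_simp
    simp
  calc ∫ v in Ioi 0, exp (-c * v) * |v - y| ^ r
      ≤ ∫ v in Ioi 0, (φ (v - y) + c⁻¹ ^ r * exp (-c * v)) :=
        setIntegral_mono_on (integrableOn_exp_neg_mul_mul_abs_sub_rpow y hc hr₀ hr)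
          (hφ.integrableOn.add hexp) measurableSet_Ioi fun v hv =>
            exp_neg_mul_mul_abs_sub_rpow_le y hc.le hr (inv_pos.mpr hc) (le_of_lt hv)
    _ ≤ 2 * c⁻¹ ^ (r + 1) / (r + 1) + c⁻¹ ^ r * c⁻¹ := by
        rw [integral_add hφ.integrableOn hexp, hexp_eq]; linarith
    _ = (2 / (r + 1) + 1) * c ^ (-(r + 1)) := by
        rw [← rpow_add_one (inv_ne_zero hc.ne'), inv_rpow hc.le, ← rpow_neg hc.le]
        ring

end ExpWeighted

lemma norm_ofReal_add_mul_I_sub (u v : ℝ) (z : ℂ) :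
    ‖(u : ℂ) + v * Complex.I - z‖ = √((u - z.re) ^ 2 + (v - z.im) ^ 2) := by
  rw [Complex.norm_def, Complex.normSq_apply]
  congr 1
  simp
  ring

lemma rpow_neg_quarter_mul_div_norm_le (z₀ u v E : ℝ) (z : ℂ) (hE : 0 ≤ E) :
    ((u - z₀) ^ 2 + v ^ 2) ^ (-(1 / 4) : ℝ) * E / ‖(u : ℂ) + v * Complex.I - z‖
      ≤ E * (((u - z₀) ^ 2 + v ^ 2) ^ (-(3 / 4) : ℝ)
        + ((u - z.re) ^ 2 + (v - z.im) ^ 2) ^ (-(3 / 4) : ℝ)) := by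
  have hY : 0 ≤ (u - z.re) ^ 2 + (v - z.im) ^ 2 := by positivity
  rw [norm_ofReal_add_mul_I_sub, sqrt_eq_rpow, div_eq_mul_inv, ← rpow_neg hY, mul_right_comm,
    mul_comm _ E]
  exact mul_le_mul_of_nonneg_left
    (rpow_neg_quarter_mul_rpow_neg_half_le (by positivity) hY) hE

lemma setIntegral_rpow_neg_quarter_mul_div_norm_le (z₀ v E : ℝ) (z : ℂ) (s : Set ℝ)
    (hE : 0 ≤ E) (hv : v ≠ 0) (hvz : v ≠ z.im) :
    ∫ u in s, ((u - z₀) ^ 2 + v ^ 2) ^ (-(1 / 4) : ℝ) * E / ‖(u : ℂ) + v * Complex.I - z‖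
      ≤ E * (lorentzIntegral (3 / 4) * (|v| ^ (-(1 / 2) : ℝ) + |v - z.im| ^ (-(1 / 2) : ℝ))) := by
  have hs : (1 / 2 : ℝ) < 3 / 4 := by norm_num
  have hvz' : v - z.im ≠ 0 := sub_ne_zero.mpr hvz
  have hmajorant : Integrable fun u => E * (((u - z₀) ^ 2 + v ^ 2) ^ (-(3 / 4) : ℝ)
      + ((u - z.re) ^ 2 + (v - z.im) ^ 2) ^ (-(3 / 4) : ℝ)) :=
    ((integrable_sub_sq_add_sq_rpow_neg z₀ hv hs).add
      (integrable_sub_sq_add_sq_rpow_neg z.re hvz' hs)).const_mul E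
  calc ∫ u in s, ((u - z₀) ^ 2 + v ^ 2) ^ (-(1 / 4) : ℝ) * E / ‖(u : ℂ) + v * Complex.I - z‖
      ≤ ∫ u in s, E * (((u - z₀) ^ 2 + v ^ 2) ^ (-(3 / 4) : ℝ)
          + ((u - z.re) ^ 2 + (v - z.im) ^ 2) ^ (-(3 / 4) : ℝ)) :=
        integral_mono_of_nonneg (Filter.Eventually.of_forall fun u => by positivity)
          hmajorant.integrableOn
          (Filter.Eventually.of_forall fun u => rpow_neg_quarter_mul_div_norm_le z₀ u v E z hE)
    _ ≤ ∫ u, E * (((u - z₀) ^ 2 + v ^ 2) ^ (-(3 / 4) : ℝ)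
          + ((u - z.re) ^ 2 + (v - z.im) ^ 2) ^ (-(3 / 4) : ℝ)) :=
        setIntegral_le_integral hmajorant (Filter.Eventually.of_forall fun u => by positivity)
    _ = _ := by
        rw [integral_const_mul, integral_add (integrable_sub_sq_add_sq_rpow_neg z₀ hv hs)
          (integrable_sub_sq_add_sq_rpow_neg z.re hvz' hs),
          integral_sub_sq_add_sq_rpow_neg _ _ hv, integral_sub_sq_add_sq_rpow_neg _ _ hvz',
          show (1 : ℝ) - 2 * (3 / 4) = -(1 / 2) by norm_num]
        ring

lemma integral_setIntegral_rpow_neg_quarter_mul_exp_div_norm_le {c : ℝ} (z₀ : ℝ) (hc : 0 < c)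
    (z : ℂ) (s : ℝ → Set ℝ) :
    ∫ v in Ioi 0, ∫ u in s v,
        ((u - z₀) ^ 2 + v ^ 2) ^ (-(1 / 4) : ℝ) * exp (-c * v) / ‖(u : ℂ) + v * Complex.I - z‖
      ≤ 10 * lorentzIntegral (3 / 4) * c ^ (-(1 / 2) : ℝ) := by
  have hr₀ : (-1 : ℝ) < -(1 / 2) := by norm_num
  have hr : (-(1 / 2) : ℝ) ≤ 0 := by norm_num
  have hint (y : ℝ) := integrableOn_exp_neg_mul_mul_abs_sub_rpow y hc hr₀ hr
  have hbound (y : ℝ) : ∫ v in Ioi 0, exp (-c * v) * |v - y| ^ (-(1 / 2) : ℝ)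
      ≤ 5 * c ^ (-(1 / 2) : ℝ) := by
    convert setIntegral_exp_neg_mul_mul_abs_sub_rpow_le y hc hr₀ hr using 2 <;> norm_num
  set K := lorentzIntegral (3 / 4)
  have hK : 0 ≤ K := (lorentzIntegral_pos (by norm_num)).le
  have hmajorant := ((hint 0).add (hint z.im)).const_mul K
  have hae : ∀ᵐ v ∂volume.restrict (Ioi 0), 0 < v ∧ v ≠ z.im := by
    filter_upwards [ae_restrict_mem measurableSet_Ioi,
      ae_restrict_of_ae (Measure.ae_ne volume z.im)] with v hv hvz using ⟨hv, hvz⟩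
  calc ∫ v in Ioi 0, ∫ u in s v,
        ((u - z₀) ^ 2 + v ^ 2) ^ (-(1 / 4) : ℝ) * exp (-c * v) / ‖(u : ℂ) + v * Complex.I - z‖
      ≤ ∫ v in Ioi 0, K * (exp (-c * v) * |v - 0| ^ (-(1 / 2) : ℝ)
          + exp (-c * v) * |v - z.im| ^ (-(1 / 2) : ℝ)) := by
        refine integral_mono_of_nonneg (Filter.Eventually.of_forall fun v =>
          integral_nonneg fun u => by positivity) hmajorant ?_
        filter_upwards [hae] with v ⟨hv, hvz⟩
        refine (setIntegral_rpow_neg_quarter_mul_div_norm_le z₀ v _ z (s v) (exp_pos _).le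
          hv.ne' hvz).trans_eq ?_
        rw [sub_zero]
        ring
    _ ≤ K * (5 * c ^ (-(1 / 2) : ℝ) + 5 * c ^ (-(1 / 2) : ℝ)) := by
        rw [integral_const_mul, integral_add (hint 0) (hint z.im)]
        gcongr
        exacts [hbound 0, hbound z.im]
    _ = 10 * K * c ^ (-(1 / 2) : ℝ) := by ring

/-- Appendix-B estimate for `I₃` (equation (B.6)): for every `ε > 0` there is `C > 0`
such that for all `z₀ > 0`, `t ≥ 1` and all `z ∈ ℂ`,
`∫_0^∞ ∫_{v+z₀}^∞ ((u − z₀)² + v²)^{−1/4} e^{−tεv/2} / |u + iv − z| du dv ≤ C t^{−1/2}`. -/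
theorem stmt_19 :
    ∀ ε > (0 : ℝ), ∃ C > (0 : ℝ), ∀ z₀ > (0 : ℝ), ∀ t ≥ (1 : ℝ), ∀ z : ℂ,
      (∫ v in Set.Ioi (0 : ℝ), ∫ u in Set.Ioi (v + z₀),
          ((u - z₀) ^ 2 + v ^ 2) ^ (-(1 / 4) : ℝ) * Real.exp (-(t * ε * v / 2)) /
            ‖(u : ℂ) + (v : ℂ) * Complex.I - z‖) ≤
        C * t ^ (-(1 / 2) : ℝ) := by
  intro ε hε
  refine ⟨10 * lorentzIntegral (3 / 4) * (ε / 2) ^ (-(1 / 2) : ℝ),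
    by have := lorentzIntegral_pos (s := 3 / 4) (by norm_num); positivity, ?_⟩
  intro z₀ _ t ht z
  have ht₀ : 0 < t := by linarith
  have hexponent (v : ℝ) : -(t * ε * v / 2) = -(t * (ε / 2)) * v := by ring
  simp only [hexponent]
  calc _ ≤ 10 * lorentzIntegral (3 / 4) * (t * (ε / 2)) ^ (-(1 / 2) : ℝ) :=
        integral_setIntegral_rpow_neg_quarter_mul_exp_div_norm_le z₀ (by positivity) z _
    _ = _ := by rw [mul_rpow (by positivity) (by positivity)]; ring
end
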